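/- arXiv:2507.00562 — 2 statements merged into one kernel-verified Lean document; each statement's English description precedes it below -/
import Mathlib

section
/- Let the trap configuration satisfy the quadratic recursion with constant c, where |I_1|^{-1} < c < 1. Then the expected survival time of the trapped random walk is finite: 𝔼(τ) < ∞. -/
open MeasureTheory ENNReal Set

noncomputable section

/-- A trap configuration: a trap at the origin and infinitely many traps. -/
def IsTrapConfig (ω : ℕ → Bool) : Prop :=
  ω 0 = true ∧ {x : ℕ | ω x = true}.Infinite

/-- The location `x_i` of the `i`-th trap (traps enumerated in increasing order, `x_0 = 0`). -/
def trapLoc (ω : ℕ → Bool) (i : ℕ) : ℕ :=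
  Nat.nth (fun x => ω x = true) i

/-- The length `|I_i| = x_i - x_{i-1}` of the `i`-th interval between traps, for `i ≥ 1`. -/
def gapLen (ω : ℕ → Bool) (i : ℕ) : ℕ :=
  trapLoc ω i - trapLoc ω (i - 1)

/-- The landscape satisfies the quadratic recursion `|I_{j+1}| = c * |I_j|^2` for all `j ≥ 1`. -/
def QuadRec (ω : ℕ → Bool) (c : ℝ) : Prop :=
  ∀ j : ℕ, 1 ≤ j → (gapLen ω (j + 1) : ℝ) = c * (gapLen ω j : ℝ) ^ 2

/-- One-step transition probabilities of the trapped random walk on `ℕ ∪ {*}`,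
where `none` plays the role of the absorbing cemetery state `*`. -/
def transProb (ω : ℕ → Bool) : Option ℕ → Option ℕ → ℝ
  | none, none => 1
  | none, some _ => 0
  | some x, none => if ω x = true then 1 / 3 else 0
  | some x, some y =>
    if x = 0 then (if y = 1 then 2 / 3 else 0)
    else if ω x = true then (if y = x - 1 ∨ y = x + 1 then 1 / 3 else 0)
    else (if y = x - 1 ∨ y = x + 1 then 1 / 2 else 0)

/-- `S` is (a version of) the trapped random walk in the landscape `ω` under the probability
measure `P`: it starts at `0` and is a Markov chain with transition probabilities `transProb ω`. -/
def IsTrappedRW (ω : ℕ → Bool) {Ω : Type*} [MeasurableSpace Ω]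
    (P : Measure Ω) (S : ℕ → Ω → Option ℕ) : Prop :=
  IsProbabilityMeasure P ∧
  (∀ (n : ℕ) (y : Option ℕ), MeasurableSet {a | S n a = y}) ∧
  P {a | S 0 a = some 0} = 1 ∧
  ∀ (n : ℕ) (path : ℕ → Option ℕ) (y : Option ℕ),
    P {a | (∀ i ≤ n, S i a = path i) ∧ S (n + 1) a = y}
      = ENNReal.ofReal (transProb ω (path n) y) * P {a | ∀ i ≤ n, S i a = path i}

/-- The survival time `τ = inf {k : S k = *}`, valued in `ℕ∞`. -/
def survivalTime {Ω : Type*} (S : ℕ → Ω → Option ℕ) (a : Ω) : ℕ∞ :=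
  sInf {t : ℕ∞ | ∃ k : ℕ, (k : ℕ∞) = t ∧ S k a = none}

/-- The expected survival time `𝔼(τ)`, valued in `ℝ≥0∞`. -/
def expSurvival {Ω : Type*} [MeasurableSpace Ω] (P : Measure Ω)
    (S : ℕ → Ω → Option ℕ) : ℝ≥0∞ :=
  ∫⁻ a, ((survivalTime S a : ℕ∞) : ℝ≥0∞) ∂P

/-- Two landscapes are similar in the tail. -/
def SimilarInTail (ω₁ ω₂ : ℕ → Bool) : Prop :=
  ∃ p₁ p₂ : ℕ, ∀ x : ℕ, ω₁ (p₁ + x) = ω₂ (p₂ + x)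

/-- Indicator that a state is a trap site. -/
def trapInd (ω : ℕ → Bool) : Option ℕ → Bool
  | none => false
  | some x => ω x

/-- Number of visits to the trap set at times `1, …, k`. -/
def visitCount {Ω : Type*} (ω : ℕ → Bool) (S : ℕ → Ω → Option ℕ) (a : Ω) (k : ℕ) : ℕ :=
  ((Finset.Icc 1 k).filter fun j => trapInd ω (S j a) = true).card

/-- `N`, the total number of visits to the trap set at times `≥ 1` (before absorption). -/
def numVisits {Ω : Type*} (ω : ℕ → Bool) (S : ℕ → Ω → Option ℕ) (a : Ω) : ℕ∞ :=
  ⨆ k : ℕ, (visitCount ω S a k : ℕ∞)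

/-- The hitting times `𝒯_i`: `𝒯_0 = 0` and `𝒯_i = inf {k ≥ 1 : #visits to D in [1,k] = i}`. -/
def hitTime {Ω : Type*} (ω : ℕ → Bool) (S : ℕ → Ω → Option ℕ) (i : ℕ) (a : Ω) : ℕ∞ :=
  if i = 0 then 0
  else sInf {t : ℕ∞ | ∃ k : ℕ, (k : ℕ∞) = t ∧ 1 ≤ k ∧ visitCount ω S a k = i}

/-- The inter-arrival times `Y_i = 𝒯_i - 𝒯_{i-1}` for `1 ≤ i ≤ N`, and `Y_i = 0` for `i > N`. -/
def interArrival {Ω : Type*} (ω : ℕ → Bool) (S : ℕ → Ω → Option ℕ) (i : ℕ) (a : Ω) : ℕ∞ :=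
  if 1 ≤ i ∧ (i : ℕ∞) ≤ numVisits ω S a
  then hitTime ω S i a - hitTime ω S (i - 1) a else 0

/-- `Y_i` viewed as an `ℝ≥0∞`-valued random variable. -/
def Yfun {Ω : Type*} (ω : ℕ → Bool) (S : ℕ → Ω → Option ℕ) (i : ℕ) (a : Ω) : ℝ≥0∞ :=
  ((interArrival ω S i a : ℕ∞) : ℝ≥0∞)

/-- The embedded walk `ξ_j = S_{𝒯_j}` for `j ≤ N`, and `ξ_j = *` for `j > N`. -/
def embWalk {Ω : Type*} (ω : ℕ → Bool) (S : ℕ → Ω → Option ℕ) (j : ℕ) (a : Ω) : Option ℕ :=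
  if (j : ℕ∞) ≤ numVisits ω S a then S (hitTime ω S j a).toNat a else none

/-- Sign of the increment of the embedded walk (an arbitrary junk value `2` is produced
if one of the two states is the cemetery state). -/
def stepSign : Option ℕ → Option ℕ → ℤ
  | some x, some y => Int.sign ((y : ℤ) - (x : ℤ))
  | _, _ => 2

/-- `κ` belongs to `𝒦`: entries `κ_1, …, κ_{i-1}` lie in `{-1,0,1}` and all partial sums
are nonnegative. -/
def InKappaSet (i : ℕ) (κ : ℕ → ℤ) : Prop :=
  (∀ j : ℕ, 1 ≤ j → j ≤ i - 1 → κ j = -1 ∨ κ j = 0 ∨ κ j = 1) ∧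
  ∀ m : ℕ, 1 ≤ m → m ≤ i - 1 → 0 ≤ ∑ n ∈ Finset.Icc 1 m, κ n

/-- The event `A_κ`: the walk visits at least `i-1` traps and the embedded walk moves
according to `κ` (for `i = 1` this is the whole sample space). -/
def eventA {Ω : Type*} (ω : ℕ → Bool) (S : ℕ → Ω → Option ℕ) (i : ℕ) (κ : ℕ → ℤ) : Set Ω :=
  {a | ((i - 1 : ℕ) : ℕ∞) ≤ numVisits ω S a ∧
    ∀ j : ℕ, 1 ≤ j → j ≤ i - 1 →
      stepSign (embWalk ω S (j - 1) a) (embWalk ω S j a) = κ j}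

/-- The event `A_κ⁺ = A_κ ∩ {S_{𝒯_{i-1}+1} = S_{𝒯_{i-1}} + 1}` (the whole sample space
for `i = 1`). -/
def eventAplus {Ω : Type*} (ω : ℕ → Bool) (S : ℕ → Ω → Option ℕ) (i : ℕ) (κ : ℕ → ℤ) :
    Set Ω :=
  if i = 1 then Set.univ
  else eventA ω S i κ ∩
    {a | ∃ x : ℕ, S (hitTime ω S (i - 1) a).toNat a = some x ∧
      S ((hitTime ω S (i - 1) a).toNat + 1) a = some (x + 1)}

/-- Conditional expectation `𝔼(f | A)` of an `ℝ≥0∞`-valued function given an event `A`. -/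
def condExpOn {Ω : Type*} [MeasurableSpace Ω] (P : Measure Ω) (A : Set Ω)
    (f : Ω → ℝ≥0∞) : ℝ≥0∞ :=
  (∫⁻ a in A, f a ∂P) / P A

/-- Conditional probability `ℙ(A | B)`. -/
def condProb {Ω : Type*} [MeasurableSpace Ω] (P : Measure Ω) (A B : Set Ω) : ℝ≥0∞ :=
  P (A ∩ B) / P B

/-- Crossing times between `b` and `b+1`, shifted by one: `crossTime S b 0 = l_{-1} = 0`,
`crossTime S b (n+1) = l_n` where `l_0 = inf {t : S t = b}` and `l_i` alternately hits
`b+1` and `b`. -/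
def crossTime {Ω : Type*} (S : ℕ → Ω → Option ℕ) (b : ℕ) : ℕ → Ω → ℕ∞
  | 0, _ => 0
  | 1, a => sInf {t : ℕ∞ | ∃ k : ℕ, (k : ℕ∞) = t ∧ S k a = some b}
  | n + 2, a =>
    if crossTime S b (n + 1) a = ⊤ then ⊤
    else
      sInf {t : ℕ∞ | ∃ k : ℕ, (k : ℕ∞) = t ∧ crossTime S b (n + 1) a ≤ (k : ℕ∞) ∧
        S k a = some (if S (crossTime S b (n + 1) a).toNat a = some b then b + 1 else b)}

/-- `T_n = τ ∧ l_n - τ ∧ l_{n-1}` (with the index shift `l_n = crossTime S b (n+1)`). -/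
def crossDur {Ω : Type*} (S : ℕ → Ω → Option ℕ) (b : ℕ) (n : ℕ) (a : Ω) : ℕ∞ :=
  min (survivalTime S a) (crossTime S b (n + 1) a)
    - min (survivalTime S a) (crossTime S b n a)

/-- `ℰ_0 = 𝔼[T_0]`. -/
def cE0 {Ω : Type*} [MeasurableSpace Ω] (P : Measure Ω) (S : ℕ → Ω → Option ℕ)
    (b : ℕ) : ℝ≥0∞ :=
  ∫⁻ a, ((crossDur S b 0 a : ℕ∞) : ℝ≥0∞) ∂P

/-- `𝒫_0 = ℙ(l_0 < ∞)`. -/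
def cP0 {Ω : Type*} [MeasurableSpace Ω] (P : Measure Ω) (S : ℕ → Ω → Option ℕ)
    (b : ℕ) : ℝ≥0∞ :=
  P {a | crossTime S b 1 a ≠ ⊤}

/-- `ℰ₊ = 𝔼[T_2 | l_1 < ∞]`. -/
def cEplus {Ω : Type*} [MeasurableSpace Ω] (P : Measure Ω) (S : ℕ → Ω → Option ℕ)
    (b : ℕ) : ℝ≥0∞ :=
  condExpOn P {a | crossTime S b 2 a ≠ ⊤} (fun a => ((crossDur S b 2 a : ℕ∞) : ℝ≥0∞))

/-- `ℰ₋ = 𝔼[T_3 | l_2 < ∞]`. -/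
def cEminus {Ω : Type*} [MeasurableSpace Ω] (P : Measure Ω) (S : ℕ → Ω → Option ℕ)
    (b : ℕ) : ℝ≥0∞ :=
  condExpOn P {a | crossTime S b 3 a ≠ ⊤} (fun a => ((crossDur S b 3 a : ℕ∞) : ℝ≥0∞))

/-- `𝒫₊ = ℙ(l_2 < ∞ | l_1 < ∞)`. -/
def cPplus {Ω : Type*} [MeasurableSpace Ω] (P : Measure Ω) (S : ℕ → Ω → Option ℕ)
    (b : ℕ) : ℝ≥0∞ :=
  P {a | crossTime S b 3 a ≠ ⊤} / P {a | crossTime S b 2 a ≠ ⊤}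

/-- `𝒫₋ = ℙ(l_3 < ∞ | l_2 < ∞)`. -/
def cPminus {Ω : Type*} [MeasurableSpace Ω] (P : Measure Ω) (S : ℕ → Ω → Option ℕ)
    (b : ℕ) : ℝ≥0∞ :=
  P {a | crossTime S b 4 a ≠ ⊤} / P {a | crossTime S b 3 a ≠ ⊤}

/-- `ω₂` is obtained from `ω₁` by lengthening the `k`-th interval by one site. -/
def IsLengthened (ω₁ ω₂ : ℕ → Bool) (k : ℕ) : Prop :=
  (∀ x : ℕ, x ≤ trapLoc ω₁ (k - 1) → ω₂ x = ω₁ x) ∧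
  ω₂ (trapLoc ω₁ (k - 1) + 1) = false ∧
  ∀ x : ℕ, trapLoc ω₁ (k - 1) + 1 < x → ω₂ x = ω₁ (x - 1)

end

/-!
Foster–Lyapunov argument. If `f ≥ 0` on `ℕ` satisfies `∑_z p(x, z) f(z) + 1 ≤ f(x)` for the
transition probabilities `p` of the walk among the sites, then pairing the law of `S_n` with
`f` loses at least `ℙ(S_n ≠ *)` at each step, so `𝔼(τ) ≤ ∑_n ℙ(S_n ≠ *) ≤ f(0)`.

Such an `f` is the linear interpolation of values `a_j` at the traps `x_j`, plus on each interval
the exit time `(x - x_j)(x_{j+1} - x)` of simple random walk; off the traps the drift inequality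
then holds with equality. At a trap `x_j` (`j ≥ 1`) the killing probability `1/3` has to absorb
the costs `|I_j|` and `|I_{j+1}| + (a_{j+1} - a_j) / |I_{j+1}|` of the two neighbours. For
`a_j = 2 |I_{j+1}| / (1 - c) + 1` the recursion turns the slope into
`2 (c |I_{j+1}| - 1) / (1 - c)`, and the remaining condition `|I_j| ≤ |I_{j+1}|` holds because `c |I_1| > 1` propagates to
`c |I_j| > 1` for all `j`.
-/

noncomputable def segIdx (x : ℕ → ℕ) (n : ℕ) : ℕ :=
  Nat.findGreatest (fun i => x i ≤ n) n

/-- Linear interpolation between `a i` and `a (i + 1)` on `[x i, x (i + 1)]`, plus the expected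
exit time of simple random walk from that segment. -/
noncomputable def segmentBump (x : ℕ → ℕ) (a : ℕ → ℝ) (i : ℕ) (t : ℝ) : ℝ :=
  a i + (a (i + 1) - a i) * (t - x i) / (x (i + 1) - x i) + (t - x i) * (x (i + 1) - t)

noncomputable def bumpInterp (x : ℕ → ℕ) (a : ℕ → ℝ) (n : ℕ) : ℝ :=
  segmentBump x a (segIdx x n) n

section BumpInterp

variable {x : ℕ → ℕ} (a : ℕ → ℝ)

theorem segIdx_spec (hx : StrictMono x) (h0 : x 0 = 0) (n : ℕ) :
    x (segIdx x n) ≤ n ∧ n < x (segIdx x n + 1) := by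
  have hle : x (segIdx x n) ≤ n :=
    Nat.findGreatest_spec (P := fun i => x i ≤ n) n.zero_le (by simp [h0])
  refine ⟨hle, lt_of_not_ge fun h => ?_⟩
  have : segIdx x n + 1 ≤ segIdx x n :=
    Nat.le_findGreatest (P := fun i => x i ≤ n) (hx.le_apply.trans h) h
  omega

theorem segIdx_eq (hx : StrictMono x) (h0 : x 0 = 0) {i n : ℕ} (h₁ : x i ≤ n)
    (h₂ : n < x (i + 1)) : segIdx x n = i := by
  obtain ⟨hl, hr⟩ := segIdx_spec hx h0 n
  have := hx.lt_iff_lt.mp (hl.trans_lt h₂)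
  have := hx.lt_iff_lt.mp (h₁.trans_lt hr)
  omega

theorem segmentBump_left (i : ℕ) : segmentBump x a i (x i) = a i := by
  simp [segmentBump]

theorem segmentBump_right {i : ℕ} (h : x i ≠ x (i + 1)) :
    segmentBump x a i (x (i + 1)) = a (i + 1) := by
  have : (x (i + 1) : ℝ) - x i ≠ 0 := sub_ne_zero.2 (by exact_mod_cast h.symm)
  simp only [segmentBump]
  field_simp
  ring

theorem segmentBump_sub_one_add_add_one (i : ℕ) (t : ℝ) :
    segmentBump x a i (t - 1) + segmentBump x a i (t + 1) = 2 * segmentBump x a i t - 2 := by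
  simp only [segmentBump]
  ring

theorem bumpInterp_eq (hx : StrictMono x) (h0 : x 0 = 0) {i n : ℕ} (h₁ : x i ≤ n)
    (h₂ : n ≤ x (i + 1)) : bumpInterp x a n = segmentBump x a i n := by
  rcases h₂.lt_or_eq with h₂ | rfl
  · rw [bumpInterp, segIdx_eq hx h0 h₁ h₂]
  · rw [bumpInterp, segIdx_eq hx h0 le_rfl (hx (Nat.lt_add_one (i + 1))), segmentBump_left,
      segmentBump_right a (hx.injective.ne (Nat.lt_add_one i).ne)]

theorem bumpInterp_node (hx : StrictMono x) (h0 : x 0 = 0) (i : ℕ) :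
    bumpInterp x a (x i) = a i := by
  rw [bumpInterp_eq a hx h0 le_rfl (hx (Nat.lt_add_one i)).le, segmentBump_left]

theorem bumpInterp_nonneg (hx : StrictMono x) (h0 : x 0 = 0) (ha : Monotone a)
    (ha0 : 0 ≤ a 0) (n : ℕ) : 0 ≤ bumpInterp x a n := by
  obtain ⟨hl, hr⟩ := segIdx_spec hx h0 n
  set i := segIdx x n
  have hl' : (x i : ℝ) ≤ n := by exact_mod_cast hl
  have hr' : (n : ℝ) ≤ x (i + 1) := by exact_mod_cast hr.le
  have hai : 0 ≤ a i := ha0.trans (ha i.zero_le)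
  have hslope : 0 ≤ (a (i + 1) - a i) * (n - x i) / (x (i + 1) - x i) :=
    div_nonneg (mul_nonneg (sub_nonneg.2 (ha i.le_succ)) (by linarith)) (by linarith)
  have hbump : 0 ≤ ((n : ℝ) - x i) * (x (i + 1) - n) := mul_nonneg (by linarith) (by linarith)
  simp only [bumpInterp, segmentBump]
  linarith

theorem bumpInterp_pred_add_succ (hx : StrictMono x) (h0 : x 0 = 0) {n : ℕ}
    (hn : n ∉ Set.range x) :
    bumpInterp x a (n - 1) + bumpInterp x a (n + 1) = 2 * bumpInterp x a n - 2 := by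
  obtain ⟨hl, hr⟩ := segIdx_spec hx h0 n
  have hl' : x (segIdx x n) < n := hl.lt_of_ne fun h => hn ⟨_, h⟩
  rw [bumpInterp_eq a hx h0 (i := segIdx x n) (by omega) (by omega),
    bumpInterp_eq a hx h0 (i := segIdx x n) (by omega) (by omega), bumpInterp,
    Nat.cast_pred (by omega), Nat.cast_add_one]
  exact segmentBump_sub_one_add_add_one a _ _

theorem bumpInterp_pred_node_le (hx : StrictMono x) (h0 : x 0 = 0) {i : ℕ}
    (ha : a i ≤ a (i + 1)) :
    bumpInterp x a (x (i + 1) - 1) ≤ a (i + 1) + ((x (i + 1) : ℝ) - x i) - 1 := by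
  have hlt := hx (Nat.lt_add_one i)
  rw [bumpInterp_eq a hx h0 (i := i) (by omega) (by omega), Nat.cast_sub (by omega)]
  have hd : (x i : ℝ) + 1 ≤ x (i + 1) := by exact_mod_cast hlt
  have hslope : (a (i + 1) - a i) * (x (i + 1) - 1 - x i) / (x (i + 1) - x i)
      ≤ a (i + 1) - a i := by
    rw [div_le_iff₀ (by linarith)]
    exact mul_le_mul_of_nonneg_left (by linarith) (sub_nonneg.2 ha)
  simp only [segmentBump, Nat.cast_one]
  linarith

theorem bumpInterp_succ_node (hx : StrictMono x) (h0 : x 0 = 0) (i : ℕ) :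
    bumpInterp x a (x i + 1) =
      a i + (a (i + 1) - a i) / (x (i + 1) - x i) + ((x (i + 1) : ℝ) - x i) - 1 := by
  rw [bumpInterp_eq a hx h0 (i := i) (by omega) (hx (Nat.lt_add_one i))]
  simp only [segmentBump]
  push_cast
  ring

end BumpInterp

namespace IsTrapConfig

variable {ω : ℕ → Bool}

theorem strictMono_trapLoc (hω : IsTrapConfig ω) : StrictMono (trapLoc ω) :=
  Nat.nth_strictMono hω.2

theorem trapLoc_zero (hω : IsTrapConfig ω) : trapLoc ω 0 = 0 := by
  rw [trapLoc, Nat.nth_zero]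
  exact Nat.sInf_eq_zero.2 (Or.inl hω.1)

theorem mem_range_trapLoc_iff (hω : IsTrapConfig ω) {n : ℕ} :
    n ∈ Set.range (trapLoc ω) ↔ ω n = true := by
  constructor
  · rintro ⟨i, rfl⟩
    exact Nat.nth_mem_of_infinite hω.2 i
  · exact fun h => ⟨_, Nat.nth_count h⟩

theorem gapLen_succ (hω : IsTrapConfig ω) (i : ℕ) :
    (gapLen ω (i + 1) : ℝ) = (trapLoc ω (i + 1) : ℝ) - trapLoc ω i := by
  rw [gapLen, Nat.add_sub_cancel, Nat.cast_sub (hω.strictMono_trapLoc (Nat.lt_add_one i)).le]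

theorem one_le_gapLen (hω : IsTrapConfig ω) (i : ℕ) : (1 : ℝ) ≤ gapLen ω (i + 1) := by
  have : (trapLoc ω i : ℝ) + 1 ≤ trapLoc ω (i + 1) := by
    exact_mod_cast hω.strictMono_trapLoc (Nat.lt_add_one i)
  rw [hω.gapLen_succ]
  linarith

end IsTrapConfig

theorem one_lt_mul_of_sq_recursion {g : ℕ → ℝ} {c : ℝ}
    (hg : ∀ j, 1 ≤ j → g (j + 1) = c * g j ^ 2) (h1 : 1 < c * g 1) {j : ℕ} (hj : 1 ≤ j) :
    1 < c * g j := by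
  induction j, hj using Nat.le_induction with
  | base => exact h1
  | succ j hj ih =>
    rw [hg j hj, show c * (c * g j ^ 2) = (c * g j) ^ 2 by ring]
    exact one_lt_pow₀ ih two_ne_zero

theorem QuadRec.gapLen_le_succ {ω : ℕ → Bool} {c : ℝ} (hrec : QuadRec ω c)
    (h1 : 1 < c * gapLen ω 1) {j : ℕ} (hj : 1 ≤ j) : (gapLen ω j : ℝ) ≤ gapLen ω (j + 1) := by
  rw [hrec j hj, sq, ← mul_assoc]
  exact le_mul_of_one_le_left (Nat.cast_nonneg _)
    (one_lt_mul_of_sq_recursion (g := fun j => (gapLen ω j : ℝ)) hrec h1 hj).le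

noncomputable def trapLevel (ω : ℕ → Bool) (c : ℝ) (j : ℕ) : ℝ :=
  2 / (1 - c) * gapLen ω (max j 1 + 1) + 1

noncomputable def trapLyap (ω : ℕ → Bool) (c : ℝ) : ℕ → ℝ :=
  bumpInterp (trapLoc ω) (trapLevel ω c)

section TrapLyap

variable {ω : ℕ → Bool} {c : ℝ}

theorem trapLevel_succ (j : ℕ) :
    trapLevel ω c (j + 1) = 2 / (1 - c) * gapLen ω (j + 2) + 1 := by
  simp [trapLevel]

theorem trapLevel_monotone (hrec : QuadRec ω c) (h1 : 1 < c * gapLen ω 1) (hc : c < 1) :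
    Monotone (trapLevel ω c) := by
  refine monotone_nat_of_le_succ fun j => ?_
  have hK : 0 ≤ 2 / (1 - c) := div_nonneg zero_le_two (by linarith)
  rcases j with _ | j
  · simp [trapLevel]
  · have := hrec.gapLen_le_succ h1 (Nat.le_add_left 1 (j + 1))
    rw [trapLevel_succ, trapLevel_succ]
    gcongr

theorem trapLyap_nonneg (hω : IsTrapConfig ω) (hrec : QuadRec ω c)
    (h1 : 1 < c * gapLen ω 1) (hc : c < 1) (n : ℕ) : 0 ≤ trapLyap ω c n := by
  refine bumpInterp_nonneg _ hω.strictMono_trapLoc hω.trapLoc_zero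
    (trapLevel_monotone hrec h1 hc) ?_ n
  have : 0 ≤ 2 / (1 - c) := div_nonneg zero_le_two (by linarith)
  simp only [trapLevel]
  positivity

theorem trapLyap_trapLoc (hω : IsTrapConfig ω) (i : ℕ) :
    trapLyap ω c (trapLoc ω i) = trapLevel ω c i :=
  bumpInterp_node _ hω.strictMono_trapLoc hω.trapLoc_zero i

theorem trapLyap_trapLoc_add_one (hω : IsTrapConfig ω) (i : ℕ) :
    trapLyap ω c (trapLoc ω i + 1) = trapLevel ω c i +
      (trapLevel ω c (i + 1) - trapLevel ω c i) / gapLen ω (i + 1) + gapLen ω (i + 1) - 1 := by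
  rw [hω.gapLen_succ]
  exact bumpInterp_succ_node _ hω.strictMono_trapLoc hω.trapLoc_zero i

theorem trapLyap_trapLoc_sub_one_le (hω : IsTrapConfig ω) (hrec : QuadRec ω c)
    (h1 : 1 < c * gapLen ω 1) (hc : c < 1) (i : ℕ) :
    trapLyap ω c (trapLoc ω (i + 1) - 1) ≤ trapLevel ω c (i + 1) + gapLen ω (i + 1) - 1 := by
  rw [hω.gapLen_succ]
  exact bumpInterp_pred_node_le _ hω.strictMono_trapLoc hω.trapLoc_zero
    (trapLevel_monotone hrec h1 hc i.le_succ)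

theorem trapLyap_drift_zero (hω : IsTrapConfig ω) (hrec : QuadRec ω c)
    (h1 : 1 < c * gapLen ω 1) (hc : c < 1) :
    2 * trapLyap ω c 1 + 3 ≤ 3 * trapLyap ω c 0 := by
  have hf0 := trapLyap_trapLoc (c := c) hω 0
  have hf1 := trapLyap_trapLoc_add_one (c := c) hω 0
  have ha1 : trapLevel ω c 1 = trapLevel ω c 0 := by simp [trapLevel]
  rw [hω.trapLoc_zero] at hf0 hf1
  rw [zero_add, ha1, sub_self, zero_div, add_zero] at hf1
  have ha0 : trapLevel ω c 0 = 2 / (1 - c) * (c * gapLen ω 1 ^ 2) + 1 := by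
    rw [← hrec 1 le_rfl]
    simp [trapLevel]
  have hG : (1 : ℝ) ≤ gapLen ω 1 := hω.one_le_gapLen 0
  have key : 2 * (gapLen ω 1 : ℝ) ≤ 2 / (1 - c) * (c * gapLen ω 1 ^ 2) := by
    rw [div_mul_eq_mul_div, le_div_iff₀ (by linarith)]
    nlinarith
  rw [hf0, hf1]
  linarith

theorem trapLyap_drift_free (hω : IsTrapConfig ω) {n : ℕ} (hn : ω n = false) :
    trapLyap ω c (n - 1) + trapLyap ω c (n + 1) + 2 = 2 * trapLyap ω c n := by
  have hn' : n ∉ Set.range (trapLoc ω) := by simp [hω.mem_range_trapLoc_iff, hn]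
  rw [trapLyap, bumpInterp_pred_add_succ _ hω.strictMono_trapLoc hω.trapLoc_zero hn']
  ring

theorem trapLyap_drift_trap (hω : IsTrapConfig ω) (hrec : QuadRec ω c)
    (h1 : 1 < c * gapLen ω 1) (hc : c < 1) (i : ℕ) :
    trapLyap ω c (trapLoc ω (i + 1) - 1) + trapLyap ω c (trapLoc ω (i + 1) + 1) + 3
      ≤ 3 * trapLyap ω c (trapLoc ω (i + 1)) := by
  set K := 2 / (1 - c)
  set G := (gapLen ω (i + 2) : ℝ)
  have hK : K * G = 2 * G + K * c * G := by
    rw [show K = 2 / (1 - c) from rfl]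
    field_simp [(by linarith : (1 - c) ≠ 0)]
    ring
  have hK0 : 0 ≤ K := div_nonneg zero_le_two (by linarith)
  have hG : 0 < G := zero_lt_one.trans_le (hω.one_le_gapLen _)
  have hGle : (gapLen ω (i + 1) : ℝ) ≤ G := hrec.gapLen_le_succ h1 (Nat.le_add_left 1 i)
  have hslope : (trapLevel ω c (i + 2) - trapLevel ω c (i + 1)) / G = K * c * G - K := by
    rw [trapLevel_succ, trapLevel_succ, hrec (i + 2) (by omega), div_eq_iff hG.ne']
    ring
  have hleft := trapLyap_trapLoc_sub_one_le hω hrec h1 hc i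
  rw [trapLyap_trapLoc hω, trapLyap_trapLoc_add_one hω, hslope]
  rw [trapLevel_succ] at hleft ⊢
  linarith

end TrapLyap

section TransProb

variable {ω : ℕ → Bool}

theorem transProb_nonneg (x y : Option ℕ) : 0 ≤ transProb ω x y := by
  unfold transProb
  split <;> (try split_ifs) <;> norm_num

theorem transProb_some_eq_zero {n z : ℕ} (h₁ : z ≠ n - 1) (h₂ : z ≠ n + 1) :
    transProb ω (some n) (some z) = 0 := by
  rcases eq_or_ne n 0 with rfl | hn
  · simp [transProb, h₂]
  · simp [transProb, hn, h₁, h₂]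

theorem transProb_of_ne_zero {n z : ℕ} (hn : n ≠ 0) (hz : z = n - 1 ∨ z = n + 1) :
    transProb ω (some n) (some z) = if ω n = true then 1 / 3 else 1 / 2 := by
  simp only [transProb, hn, hz, if_false, if_true]

theorem tsum_ofReal_transProb_mul (f : ℕ → ℝ) (hf : ∀ z, 0 ≤ f z) (n : ℕ) :
    ∑' z, ENNReal.ofReal (transProb ω (some n) (some z)) * ENNReal.ofReal (f z) =
      ENNReal.ofReal (∑ z ∈ {n - 1, n + 1}, transProb ω (some n) (some z) * f z) := by
  rw [tsum_eq_sum (s := {n - 1, n + 1}), ofReal_sum_of_nonneg]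
  · simp_rw [ENNReal.ofReal_mul (transProb_nonneg _ _)]
  · exact fun z _ => mul_nonneg (transProb_nonneg _ _) (hf z)
  · intro z hz
    simp only [Finset.mem_insert, Finset.mem_singleton, not_or] at hz
    simp [transProb_some_eq_zero hz.1 hz.2]

end TransProb

theorem trapLyap_drift {ω : ℕ → Bool} {c : ℝ} (hω : IsTrapConfig ω) (hrec : QuadRec ω c)
    (h1 : 1 < c * gapLen ω 1) (hc : c < 1) (n : ℕ) :
    ∑ z ∈ {n - 1, n + 1}, transProb ω (some n) (some z) * trapLyap ω c z + 1
      ≤ trapLyap ω c n := by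
  rw [Finset.sum_pair (by omega)]
  rcases eq_or_ne n 0 with rfl | hn
  · have := trapLyap_drift_zero hω hrec h1 hc
    rw [show transProb ω (some 0) (some (0 - 1)) = 0 from rfl,
      show transProb ω (some 0) (some (0 + 1)) = 2 / 3 from rfl]
    linarith
  rw [transProb_of_ne_zero hn (.inl rfl), transProb_of_ne_zero hn (.inr rfl)]
  cases hωn : ω n
  · have := trapLyap_drift_free (c := c) hω hωn
    rw [if_neg Bool.false_ne_true]
    linarith
  · obtain ⟨i, rfl⟩ := hω.mem_range_trapLoc_iff.2 hωn
    obtain ⟨i, rfl⟩ : ∃ j, i = j + 1 := Nat.exists_eq_add_one.2 <| Nat.pos_of_ne_zero <| by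
      rintro rfl
      exact hn hω.trapLoc_zero
    have := trapLyap_drift_trap hω hrec h1 hc i
    rw [if_pos rfl]
    linarith

theorem tsum_tsum_le_of_drift {α : Type*} (μ : ℕ → α → ℝ≥0∞) (T : α → α → ℝ≥0∞)
    (f : α → ℝ≥0∞) (hμ : ∀ n z, μ (n + 1) z ≤ ∑' y, μ n y * T y z)
    (hf : ∀ y, ∑' z, T y z * f z + 1 ≤ f y) :
    ∑' n, ∑' y, μ n y ≤ ∑' y, μ 0 y * f y := by
  have hstep (n : ℕ) : ∑' z, μ (n + 1) z * f z + ∑' y, μ n y ≤ ∑' y, μ n y * f y :=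
    calc ∑' z, μ (n + 1) z * f z + ∑' y, μ n y
        ≤ ∑' z, (∑' y, μ n y * T y z) * f z + ∑' y, μ n y := by
          gcongr with z
          exact hμ n z
      _ = ∑' y, μ n y * (∑' z, T y z * f z + 1) := by
          simp_rw [mul_add, mul_one, ENNReal.tsum_add, ← ENNReal.tsum_mul_left,
            ← ENNReal.tsum_mul_right, mul_assoc]
          rw [ENNReal.tsum_comm]
      _ ≤ ∑' y, μ n y * f y := by gcongr with y; exact hf y
  have hsum (N : ℕ) : ∑' y, μ N y * f y + ∑ n ∈ Finset.range N, ∑' y, μ n y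
      ≤ ∑' y, μ 0 y * f y := by
    induction N with
    | zero => simp
    | succ N ih =>
      rw [Finset.sum_range_succ, ← add_assoc, add_right_comm]
      exact (add_le_add (hstep N) le_rfl).trans ih
  exact ENNReal.tsum_le_of_sum_range_le fun N => le_add_self.trans (hsum N)

theorem ENat.toENNReal_le_tsum {t : ℕ∞} {g : ℕ → ℝ≥0∞}
    (hg : ∀ n : ℕ, (n : ℕ∞) < t → 1 ≤ g n) : (t : ℝ≥0∞) ≤ ∑' n, g n := by
  induction t using ENat.recTopCoe with
  | top =>
    calc ((⊤ : ℕ∞) : ℝ≥0∞) = ∑' _ : ℕ, 1 := by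
          rw [ENNReal.tsum_const_eq_top_of_ne_zero one_ne_zero, ENat.toENNReal_top]
      _ ≤ ∑' n, g n := ENNReal.tsum_le_tsum fun n => hg n (ENat.natCast_lt_top n)
  | coe m =>
    calc ((m : ℕ∞) : ℝ≥0∞) = ∑ _ ∈ Finset.range m, 1 := by simp
      _ ≤ ∑ n ∈ Finset.range m, g n :=
          Finset.sum_le_sum fun n hn => hg n (by simpa using hn)
      _ ≤ ∑' n, g n := ENNReal.sum_le_tsum _

theorem survivalTime_le {Ω : Type*} {S : ℕ → Ω → Option ℕ} {a : Ω} {n : ℕ}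
    (h : S n a = none) : survivalTime S a ≤ n :=
  sInf_le ⟨n, rfl, h⟩

def pathThrough {n : ℕ} (p : Fin n → Option ℕ) (x : Option ℕ) (i : ℕ) : Option ℕ :=
  if h : i < n then p ⟨i, h⟩ else x

theorem pathThrough_self {n : ℕ} (p : Fin n → Option ℕ) (x : Option ℕ) :
    pathThrough p x n = x := by
  simp [pathThrough]

section SamplePaths

variable {Ω : Type*} [MeasurableSpace Ω] {P : Measure Ω} {S : ℕ → Ω → Option ℕ}

theorem expSurvival_le_tsum (hmeas : ∀ n y, MeasurableSet {a | S n a = y}) :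
    expSurvival P S ≤ ∑' n, ∑' z, P {a | S n a = some z} := by
  have hind (n z : ℕ) : Measurable ({a | S n a = some z}.indicator (1 : Ω → ℝ≥0∞)) :=
    measurable_one.indicator (hmeas n _)
  calc expSurvival P S
      ≤ ∫⁻ a, ∑' n, ∑' z, {a | S n a = some z}.indicator 1 a ∂P := by
        refine lintegral_mono fun a => ENat.toENNReal_le_tsum fun n hn => ?_
        obtain ⟨z, hz⟩ := Option.ne_none_iff_exists'.1 fun h => not_lt_of_ge (survivalTime_le h) hn
        exact le_of_eq_of_le (by simp [hz]) (ENNReal.le_tsum z)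
    _ = ∑' n, ∑' z, P {a | S n a = some z} := by
        rw [lintegral_tsum fun n => (Measurable.tsum (hind n)).aemeasurable]
        congr 1 with n
        rw [lintegral_tsum fun z => (hind n z).aemeasurable]
        congr 1 with z
        exact lintegral_indicator_one (hmeas n _)

theorem measure_inter_eq_tsum_paths (hmeas : ∀ n y, MeasurableSet {a | S n a = y}) (n : ℕ)
    (x : Option ℕ) {E : Set Ω} (hE : MeasurableSet E) :
    P ({a | S n a = x} ∩ E) =
      ∑' p : Fin n → Option ℕ, P ({a | ∀ i ≤ n, S i a = pathThrough p x i} ∩ E) := by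
  rw [← measure_iUnion]
  · congr 1
    ext a
    simp only [Set.mem_inter_iff, Set.mem_ofPred_eq, Set.mem_iUnion]
    constructor
    · rintro ⟨hx, ha⟩
      refine ⟨fun i => S i a, fun i hi => ?_, ha⟩
      rcases hi.lt_or_eq with hi | rfl
      · simp [pathThrough, hi]
      · rw [pathThrough_self, hx]
    · rintro ⟨p, hp, ha⟩
      exact ⟨(hp n le_rfl).trans (pathThrough_self p x), ha⟩
  · intro p q hpq
    refine Set.disjoint_left.2 fun a ha hb => hpq (funext fun i => ?_)
    simpa [pathThrough] using (ha.1 i i.2.le).symm.trans (hb.1 i i.2.le)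
  · intro p
    refine MeasurableSet.inter ?_ hE
    simp only [Set.ofPred_forall]
    exact MeasurableSet.iInter fun i => MeasurableSet.iInter fun _ => hmeas i _

end SamplePaths

namespace IsTrappedRW

variable {ω : ℕ → Bool} {Ω : Type*} [MeasurableSpace Ω] {P : Measure Ω}
  {S : ℕ → Ω → Option ℕ}

theorem measure_step (hS : IsTrappedRW ω P S) (n : ℕ) (x y : Option ℕ) :
    P {a | S n a = x ∧ S (n + 1) a = y} =
      ENNReal.ofReal (transProb ω x y) * P {a | S n a = x} := by
  obtain ⟨-, hmeas, -, hmarkov⟩ := hS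
  calc P ({a | S n a = x} ∩ {a | S (n + 1) a = y})
      = ∑' p : Fin n → Option ℕ,
          P ({a | ∀ i ≤ n, S i a = pathThrough p x i} ∩ {a | S (n + 1) a = y}) :=
        measure_inter_eq_tsum_paths hmeas n x (hmeas _ _)
    _ = ∑' p : Fin n → Option ℕ, ENNReal.ofReal (transProb ω x y) *
          P ({a | ∀ i ≤ n, S i a = pathThrough p x i} ∩ Set.univ) := by
        congr 1 with p
        have h := hmarkov n (pathThrough p x) y
        rw [pathThrough_self] at h
        rw [Set.inter_univ]
        exact h
    _ = ENNReal.ofReal (transProb ω x y) * P {a | S n a = x} := by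
        rw [ENNReal.tsum_mul_left, ← measure_inter_eq_tsum_paths hmeas n x MeasurableSet.univ,
          Set.inter_univ]

theorem measure_succ_le (hS : IsTrappedRW ω P S) (n z : ℕ) :
    P {a | S (n + 1) a = some z} ≤
      ∑' x : ℕ, P {a | S n a = some x} * ENNReal.ofReal (transProb ω (some x) (some z)) :=
  calc P {a | S (n + 1) a = some z}
      ≤ P ({a | S n a = none ∧ S (n + 1) a = some z} ∪
          ⋃ x : ℕ, {a | S n a = some x ∧ S (n + 1) a = some z}) := by
        refine measure_mono fun a ha => ?_
        cases h : S n a <;> simp_all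
    _ ≤ 0 + ∑' x : ℕ, P {a | S n a = some x ∧ S (n + 1) a = some z} := by
        refine (measure_union_le _ _).trans (add_le_add (le_of_eq ?_) (measure_iUnion_le _))
        rw [hS.measure_step]
        simp [transProb]
    _ = _ := by simp_rw [zero_add, hS.measure_step, mul_comm]

theorem measure_start_eq_zero (hS : IsTrappedRW ω P S) {z : ℕ} (hz : z ≠ 0) :
    P {a | S 0 a = some z} = 0 := by
  obtain ⟨hP, hmeas, hstart, -⟩ := hS
  refine measure_mono_null (t := {a | S 0 a = some 0}ᶜ) (fun a ha hb => hz ?_)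
    ((prob_compl_eq_zero_iff (hmeas 0 _)).2 hstart)
  exact Option.some_injective _ (ha.symm.trans hb)

theorem expSurvival_le_of_drift (hS : IsTrappedRW ω P S) (f : ℕ → ℝ≥0∞)
    (hf : ∀ x, ∑' z, ENNReal.ofReal (transProb ω (some x) (some z)) * f z + 1 ≤ f x) :
    expSurvival P S ≤ f 0 := by
  have := hS.1
  calc expSurvival P S ≤ ∑' n, ∑' z, P {a | S n a = some z} := expSurvival_le_tsum hS.2.1
    _ ≤ ∑' z, P {a | S 0 a = some z} * f z := tsum_tsum_le_of_drift _ _ f hS.measure_succ_le hf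
    _ = P {a | S 0 a = some 0} * f 0 :=
        tsum_eq_single 0 fun z hz => by rw [hS.measure_start_eq_zero hz, zero_mul]
    _ ≤ f 0 := mul_le_of_le_one_left' prob_le_one

end IsTrappedRW

/-- if the quadratic recursion holds with `|I_1|⁻¹ < c < 1`, then the expected
survival time of the trapped random walk is finite. -/
theorem expSurvival_lt_top_of_c_lt_one
    (ω : ℕ → Bool) (hω : IsTrapConfig ω) (c : ℝ) (hrec : QuadRec ω c)
    (hc_low : ((gapLen ω 1 : ℝ))⁻¹ < c) (hc_up : c < 1)
    {Ω : Type*} [MeasurableSpace Ω] (P : MeasureTheory.Measure Ω)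
    (S : ℕ → Ω → Option ℕ) (hS : IsTrappedRW ω P S) :
    expSurvival P S < ⊤ := by
  have h1 : 1 < c * gapLen ω 1 :=
    (inv_lt_iff_one_lt_mul₀ (zero_lt_one.trans_le (hω.one_le_gapLen 0))).1 hc_low
  have hf := trapLyap_nonneg hω hrec h1 hc_up
  refine (hS.expSurvival_le_of_drift (fun n => ENNReal.ofReal (trapLyap ω c n))
    fun n => ?_).trans_lt ENNReal.ofReal_lt_top
  rw [tsum_ofReal_transProb_mul _ hf, ← ENNReal.ofReal_one, ← ENNReal.ofReal_add
    (Finset.sum_nonneg fun z _ => mul_nonneg (transProb_nonneg _ _) (hf z)) zero_le_one]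
  exact ENNReal.ofReal_le_ofReal (trapLyap_drift hω hrec h1 hc_up n)
end

section
/- For any trap configuration, the embedded walk (ξ_l) on the trap locations is a Markov chain with (sub-)transition probabilities: for i ≥ 1, ℙ(ξ_{l+1} = x_{i−1} | ξ_l = x_i) = (2/3)·(1/(2|I_i|)); for i ≥ 0, ℙ(ξ_{l+1} = x_{i+1} | ξ_l = x_i) = (2/3)·(2^{𝟙(i=0)}/(2|I_{i+1}|)); for i ≥ 0, ℙ(ξ_{l+1} = x_i | ξ_l = x_i) = (2/3)·(1 − 1/(2|I_{i+𝟙(i=0)}|) − 1/(2|I_{i+1}|)); and ℙ(ξ_{l+1} = x_j | ξ_l = x_i) = 0 for all other trap locations x_j. In particular the transition probabilities to trap locations sum to 2/3, the survival probability at each visited trap. -/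
open MeasureTheory ENNReal Set

/-!
At every visit time the walk sits on a trap `x_i`, and the event `{ξ_l = x_i}` splits into the
events "the `l`-th visit happens at time `k` and is at `x_i`", each determined by the path up to
time `k`. By the Markov property, from each of them the walk reaches `x_j` as its next trap with
the same probability `q(x_i, x_j) = ∑_y p(x_i, y) h_j(y)`, where `h_j(y)` is the probability that
the first trap seen from `y` is `x_j`. Off the traps `h_j` is harmonic for the simple random walk,
so on `[x_{m-1}, x_m]` it interpolates linearly between `𝟙(m - 1 = j)` and `𝟙(m = j)` (gambler's
ruin); finiteness comes from the kernel being substochastic. Since `h_j` vanishes at the cemetery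
state, the steps to `x_i ± 1`, of probability `1/3` each (`2/3` to `1` from the origin), give the
stated values.
-/

section MarkovChain

variable {α Ω : Type*}

def DeterminedUpTo (X : ℕ → Ω → α) (k : ℕ) (A : Set Ω) : Prop :=
  ∀ a b, (∀ i ≤ k, X i a = X i b) → a ∈ A → b ∈ A

def pathPrefix (X : ℕ → Ω → α) (k : ℕ) (a : Ω) : Fin (k + 1) → α := fun i => X i a

variable {X : ℕ → Ω → α} {A : Set Ω} {k : ℕ}

theorem DeterminedUpTo.mono {k' : ℕ} (hA : DeterminedUpTo X k A) (hk : k ≤ k') :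
    DeterminedUpTo X k' A :=
  fun a b hab => hA a b fun i hi => hab i (hi.trans hk)

theorem DeterminedUpTo.inter {B : Set Ω} (hA : DeterminedUpTo X k A) (hB : DeterminedUpTo X k B) :
    DeterminedUpTo X k (A ∩ B) :=
  fun a b hab hab' => ⟨hA a b hab hab'.1, hB a b hab hab'.2⟩

theorem DeterminedUpTo.inter_eq_succ (hA : DeterminedUpTo X k A) (y : α) :
    DeterminedUpTo X (k + 1) (A ∩ {a | X (k + 1) a = y}) := by
  rintro a b hab ⟨haA, hay⟩
  exact ⟨hA a b (fun i hi => hab i (by omega)) haA, (hab (k + 1) le_rfl).symm.trans hay⟩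

theorem DeterminedUpTo.eq_preimage_image (hA : DeterminedUpTo X k A) :
    A = pathPrefix X k ⁻¹' (pathPrefix X k '' A) := by
  refine (Set.subset_preimage_image _ _).antisymm ?_
  rintro a ⟨b, hb, hba⟩
  exact hA b a (fun i hi => congrFun hba ⟨i, Nat.lt_succ_of_le hi⟩) hb

variable [MeasurableSpace Ω]

structure IsMarkovChain (P : Measure Ω) (X : ℕ → Ω → α) (K : α → α → ℝ≥0∞) : Prop where
  measurableSet_eq : ∀ n y, MeasurableSet {a | X n a = y}
  measure_cylinder_succ : ∀ n (path : ℕ → α) y,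
    P {a | (∀ i ≤ n, X i a = path i) ∧ X (n + 1) a = y}
      = K (path n) y * P {a | ∀ i ≤ n, X i a = path i}

namespace IsMarkovChain

variable {P : Measure Ω} {K : α → α → ℝ≥0∞} (hX : IsMarkovChain P X K)
include hX

theorem measurableSet_preimage_pathPrefix (v : Fin (k + 1) → α) :
    MeasurableSet (pathPrefix X k ⁻¹' {v}) := by
  have : pathPrefix X k ⁻¹' {v} = ⋂ i : Fin (k + 1), {a | X i a = v i} := by
    ext a; simp [pathPrefix, funext_iff]
  exact this ▸ MeasurableSet.iInter fun i => hX.measurableSet_eq _ _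

theorem measure_preimage_pathPrefix_inter (v : Fin (k + 1) → α) (y : α) :
    P (pathPrefix X k ⁻¹' {v} ∩ {a | X (k + 1) a = y})
      = K (v (Fin.last k)) y * P (pathPrefix X k ⁻¹' {v}) := by
  have hcyl : pathPrefix X k ⁻¹' {v} = {a | ∀ i ≤ k, X i a = v ⟨min i k, by omega⟩} := by
    ext a
    simp only [Set.mem_preimage, Set.mem_singleton_iff, funext_iff, pathPrefix]
    refine ⟨fun h i hi => ?_, fun h i => ?_⟩
    · simpa [min_eq_left hi] using h ⟨i, by omega⟩
    · simpa [min_eq_left (Nat.lt_succ_iff.mp i.2)] using h i (Nat.lt_succ_iff.mp i.2)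
  have hlast : v (Fin.last k) = v ⟨min k k, by omega⟩ := congrArg v (Fin.ext (min_self k).symm)
  rw [hcyl, hlast]
  exact hX.measure_cylinder_succ k (fun i => v ⟨min i k, by omega⟩) y

variable [Countable α]

theorem measurableSet_of_determinedUpTo (hA : DeterminedUpTo X k A) : MeasurableSet A := by
  rw [hA.eq_preimage_image, ← Set.biUnion_preimage_singleton]
  exact MeasurableSet.biUnion (Set.to_countable _) fun v _ => hX.measurableSet_preimage_pathPrefix v

theorem measure_inter_eq_kernel_mul (hA : DeterminedUpTo X k A) {x : α} (hAx : ∀ a ∈ A, X k a = x)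
    (y : α) : P (A ∩ {a | X (k + 1) a = y}) = K x y * P A := by
  set B := pathPrefix X k '' A
  have hfib : ∀ v ∈ B, v (Fin.last k) = x := by
    rintro v ⟨a, ha, rfl⟩
    exact hAx a ha
  have hdisj := Set.pairwiseDisjoint_fiber (pathPrefix X k) B
  rw [hA.eq_preimage_image, ← Set.biUnion_preimage_singleton, Set.iUnion₂_inter,
    measure_biUnion (Set.to_countable _) (hdisj.mono fun _ => Set.inter_subset_left)
      fun v _ => (hX.measurableSet_preimage_pathPrefix v).inter (hX.measurableSet_eq _ _),
    measure_biUnion (Set.to_countable _) hdisj fun v _ => hX.measurableSet_preimage_pathPrefix v,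
    ← ENNReal.tsum_mul_left]
  refine tsum_congr fun v => ?_
  rw [hX.measure_preimage_pathPrefix_inter, hfib v v.2]

theorem measure_eq_tsum_inter {s : Set Ω} (hs : MeasurableSet s) (n : ℕ) :
    P s = ∑' y, P (s ∩ {a | X n a = y}) := by
  have hdisj : Pairwise (Function.onFun Disjoint fun y => s ∩ {a | X n a = y}) :=
    fun y y' hyy' => Set.disjoint_left.2 fun a ha ha' => hyy' (ha.2.symm.trans ha'.2)
  rw [← measure_iUnion hdisj fun y => hs.inter (hX.measurableSet_eq n y), ← Set.inter_iUnion]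
  congr
  ext a; simp

end IsMarkovChain

end MarkovChain

section FirstHit

variable {α Ω : Type*} {K : α → α → ℝ≥0∞} {D : Set α} {z : α}

open scoped Classical in
/-- Weight of the paths from `y` that avoid `D` at times `< d` and sit at `z` at time `d`. -/
noncomputable def firstHitAt (K : α → α → ℝ≥0∞) (D : Set α) (z : α) : ℕ → α → ℝ≥0∞
  | 0, y => if y = z then 1 else 0
  | d + 1, y => if y ∈ D then 0 else ∑' y', K y y' * firstHitAt K D z d y'

noncomputable def firstHitProb (K : α → α → ℝ≥0∞) (D : Set α) (z y : α) : ℝ≥0∞ :=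
  ∑' d, firstHitAt K D z d y

noncomputable def nextHitProb (K : α → α → ℝ≥0∞) (D : Set α) (x z : α) : ℝ≥0∞ :=
  ∑' y, K x y * firstHitProb K D z y

def hitsAfter (X : ℕ → Ω → α) (D : Set α) (k d : ℕ) (z : α) : Set Ω :=
  {a | X (k + 1 + d) a = z ∧ ∀ t < d, X (k + 1 + t) a ∉ D}

theorem determinedUpTo_hitsAfter (X : ℕ → Ω → α) (k d : ℕ) :
    DeterminedUpTo X (k + 1 + d) (hitsAfter X D k d z) := by
  rintro a b hab ⟨hz, hD⟩
  exact ⟨(hab _ le_rfl).symm.trans hz, fun t ht => hab (k + 1 + t) (by omega) ▸ hD t ht⟩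

theorem hitsAfter_succ (X : ℕ → Ω → α) (k d : ℕ) :
    hitsAfter X D k (d + 1) z = {a | X (k + 1) a ∉ D} ∩ hitsAfter X D (k + 1) d z := by
  ext a
  simp only [hitsAfter, Set.mem_inter_iff, Set.mem_ofPred_eq,
    show k + 1 + (d + 1) = k + 1 + 1 + d by omega]
  refine ⟨fun ⟨hz, hD⟩ => ⟨hD 0 d.succ_pos, hz, fun t ht => ?_⟩,
    fun ⟨h₀, hz, hD⟩ => ⟨hz, fun t ht => ?_⟩⟩
  · simpa [show k + 1 + (t + 1) = k + 1 + 1 + t by omega] using hD (t + 1) (by omega)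
  · rcases t with _ | t
    · exact h₀
    · simpa [show k + 1 + (t + 1) = k + 1 + 1 + t by omega] using hD t (by omega)

variable [MeasurableSpace Ω] [Countable α] {P : Measure Ω} {X : ℕ → Ω → α}

theorem IsMarkovChain.measure_inter_hitsAfter (hX : IsMarkovChain P X K) {k : ℕ} {A : Set Ω}
    {x : α} (hA : DeterminedUpTo X k A) (hAx : ∀ a ∈ A, X k a = x) (d : ℕ) :
    P (A ∩ hitsAfter X D k d z) = (∑' y, K x y * firstHitAt K D z d y) * P A := by
  induction d generalizing k A x with
  | zero =>
    have hE : hitsAfter X D k 0 z = {a | X (k + 1) a = z} := by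
      ext a; simp [hitsAfter]
    simp only [hE, firstHitAt, mul_ite, mul_one, mul_zero, tsum_ite_eq]
    exact hX.measure_inter_eq_kernel_mul hA hAx z
  | succ d ih =>
    have hdet : DeterminedUpTo X (k + 1 + (d + 1)) (A ∩ hitsAfter X D k (d + 1) z) :=
      (hA.mono (by omega)).inter (determinedUpTo_hitsAfter X k (d + 1))
    rw [hX.measure_eq_tsum_inter (hX.measurableSet_of_determinedUpTo hdet) (k + 1),
      ← ENNReal.tsum_mul_right]
    refine tsum_congr fun y => ?_
    rw [hitsAfter_succ, ← Set.inter_assoc]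
    by_cases hy : y ∈ D
    · have hempty : A ∩ {a | X (k + 1) a ∉ D} ∩ hitsAfter X D (k + 1) d z
          ∩ {a | X (k + 1) a = y} = ∅ :=
        Set.eq_empty_of_forall_notMem fun a ⟨⟨⟨_, hD⟩, _⟩, hay⟩ => hD (hay ▸ hy)
      simp [hempty, firstHitAt, hy]
    · have hset : A ∩ {a | X (k + 1) a ∉ D} ∩ hitsAfter X D (k + 1) d z ∩ {a | X (k + 1) a = y}
          = A ∩ {a | X (k + 1) a = y} ∩ hitsAfter X D (k + 1) d z := by
        ext a
        constructor
        · rintro ⟨⟨⟨ha, -⟩, hh⟩, hay⟩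
          exact ⟨⟨ha, hay⟩, hh⟩
        · rintro ⟨⟨ha, hay⟩, hh⟩
          exact ⟨⟨⟨ha, fun hD => hy (hay ▸ hD)⟩, hh⟩, hay⟩
      rw [hset, ih (hA.inter_eq_succ y) (fun a ha => ha.2), hX.measure_inter_eq_kernel_mul hA hAx y]
      simp only [firstHitAt, hy, if_false]
      ring

/-- The strong Markov property at the first visit to `D` after time `k`. -/
theorem IsMarkovChain.measure_inter_iUnion_hitsAfter (hX : IsMarkovChain P X K) (hz : z ∈ D)
    {k : ℕ} {A : Set Ω} {x : α} (hA : DeterminedUpTo X k A) (hAx : ∀ a ∈ A, X k a = x) :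
    P (A ∩ ⋃ d, hitsAfter X D k d z) = nextHitProb K D x z * P A := by
  have hdisj : Pairwise (Function.onFun Disjoint fun d => A ∩ hitsAfter X D k d z) := by
    refine fun d d' hdd' => Set.disjoint_left.2 fun a ⟨_, hz₁, hD₁⟩ ⟨_, hz₂, hD₂⟩ => ?_
    rcases Nat.lt_or_gt_of_ne hdd' with h | h
    · exact hD₂ d h (hz₁ ▸ hz)
    · exact hD₁ d' h (hz₂ ▸ hz)
  rw [Set.inter_iUnion, measure_iUnion hdisj fun d => hX.measurableSet_of_determinedUpTo
      ((hA.mono (by omega)).inter (determinedUpTo_hitsAfter X k d)),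
    tsum_congr (hX.measure_inter_hitsAfter hA hAx), ENNReal.tsum_mul_right,
    ENNReal.tsum_comm, nextHitProb]
  simp only [firstHitProb, ENNReal.tsum_mul_left]

end FirstHit

section FirstHitProb

variable {α : Type*} {K : α → α → ℝ≥0∞} {D : Set α} {z : α}

theorem firstHitAt_succ_of_mem {y : α} (hy : y ∈ D) (d : ℕ) : firstHitAt K D z (d + 1) y = 0 := by
  simp [firstHitAt, hy]

open scoped Classical in
theorem firstHitProb_of_mem {y : α} (hy : y ∈ D) :
    firstHitProb K D z y = if y = z then 1 else 0 := by
  rw [firstHitProb, tsum_eq_zero_add' ENNReal.summable]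
  simp only [firstHitAt_succ_of_mem hy, tsum_zero, add_zero]
  rfl

theorem firstHitProb_of_notMem (hz : z ∈ D) {y : α} (hy : y ∉ D) :
    firstHitProb K D z y = ∑' y', K y y' * firstHitProb K D z y' := by
  have hyz : y ≠ z := fun h => hy (h ▸ hz)
  rw [firstHitProb, tsum_eq_zero_add' ENNReal.summable]
  simp only [firstHitAt, hyz, hy, if_false, zero_add, firstHitProb, ← ENNReal.tsum_mul_left]
  exact ENNReal.tsum_comm

theorem firstHitProb_le_one (hK : ∀ y ∉ D, ∑' y', K y y' ≤ 1) (hz : z ∈ D) (y : α) :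
    firstHitProb K D z y ≤ 1 := by
  suffices h : ∀ n y, ∑ d ∈ Finset.range n, firstHitAt K D z d y ≤ 1 from
    ENNReal.tsum_le_of_sum_range_le (h · y)
  intro n
  induction n with
  | zero => simp
  | succ n ih =>
    intro y
    rw [Finset.sum_range_succ']
    by_cases hy : y ∈ D
    · simp only [firstHitAt_succ_of_mem hy, Finset.sum_const_zero, zero_add]
      simp only [firstHitAt]
      split_ifs <;> simp
    · have hyz : y ≠ z := fun h => hy (h ▸ hz)
      simp only [firstHitAt, hy, hyz, if_false, add_zero]
      calc ∑ d ∈ Finset.range n, ∑' y', K y y' * firstHitAt K D z d y'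
          = ∑' y', K y y' * ∑ d ∈ Finset.range n, firstHitAt K D z d y' := by
            rw [← Summable.tsum_finsetSum fun _ _ => ENNReal.summable]
            simp only [Finset.mul_sum]
        _ ≤ ∑' y', K y y' := ENNReal.tsum_le_tsum fun y' => mul_le_of_le_one_right' (ih y')
        _ ≤ 1 := hK y hy

theorem firstHitProb_eq_zero_of_absorbing {c : α} (hc : ∀ y ≠ c, K c y = 0) (hcz : c ≠ z) :
    firstHitProb K D z c = 0 := by
  refine ENNReal.tsum_eq_zero.2 fun d => ?_
  induction d with
  | zero => simp [firstHitAt, hcz]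
  | succ d ih =>
    simp only [firstHitAt]
    split_ifs
    · rfl
    · refine ENNReal.tsum_eq_zero.2 fun y => ?_
      by_cases hy : y = c
      · rw [hy, ih, mul_zero]
      · rw [hc y hy, zero_mul]

end FirstHitProb

theorem eq_interpolate_of_harmonic (f : ℕ → ℝ) {L : ℕ} (hL : 0 < L)
    (hf : ∀ n, 0 < n → n < L → 2 * f n = f (n - 1) + f (n + 1)) {n : ℕ} (hn : n ≤ L) :
    f n = f 0 + n / L * (f L - f 0) := by
  have hlin : ∀ n ≤ L, f n = f 0 + n * (f 1 - f 0) := by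
    intro n
    induction n using Nat.strong_induction_on with
    | _ n ih =>
      match n with
      | 0 => simp
      | 1 => simp
      | n + 2 =>
        intro hn
        have h := hf (n + 1) (by omega) (by omega)
        rw [Nat.add_sub_cancel, ih n (by omega) (by omega), ih (n + 1) (by omega) (by omega)] at h
        push_cast at h ⊢
        linarith
  rw [hlin n hn, hlin L le_rfl]
  field_simp
  ring

section TrapConfig

variable {ω : ℕ → Bool}

theorem IsTrapConfig.trapLoc_mem (hω : IsTrapConfig ω) (i : ℕ) : ω (trapLoc ω i) = true :=
  Nat.nth_mem_of_infinite hω.2 i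

theorem IsTrapConfig.trapLoc_strictMono (hω : IsTrapConfig ω) : StrictMono (trapLoc ω) :=
  Nat.nth_strictMono hω.2

theorem IsTrapConfig.trapLoc_zero_s8 (hω : IsTrapConfig ω) : trapLoc ω 0 = 0 :=
  Nat.nth_zero_of_zero hω.1

theorem IsTrapConfig.trapLoc_inj (hω : IsTrapConfig ω) {i j : ℕ} :
    trapLoc ω i = trapLoc ω j ↔ i = j :=
  hω.trapLoc_strictMono.injective.eq_iff

theorem eq_false_of_trapLoc_lt_of_lt_succ {i x : ℕ} (h₁ : trapLoc ω i < x)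
    (h₂ : x < trapLoc ω (i + 1)) : ω x = false := by
  by_contra hx
  exact absurd (Nat.le_nth_of_lt_nth_succ h₂ (Bool.not_eq_false _ ▸ hx)) (not_le.2 h₁)

theorem IsTrapConfig.one_le_gapLen_s8 (hω : IsTrapConfig ω) {i : ℕ} (hi : 1 ≤ i) : 1 ≤ gapLen ω i := by
  have := hω.trapLoc_strictMono (show i - 1 < i by omega)
  unfold gapLen
  omega

theorem IsTrapConfig.one_le_gapLen_real (hω : IsTrapConfig ω) {i : ℕ} (hi : 1 ≤ i) :
    (1 : ℝ) ≤ gapLen ω i := by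
  exact_mod_cast hω.one_le_gapLen_s8 hi

theorem IsTrapConfig.trapLoc_add_gapLen (hω : IsTrapConfig ω) (i : ℕ) :
    trapLoc ω i + gapLen ω (i + 1) = trapLoc ω (i + 1) := by
  have := hω.trapLoc_strictMono (Nat.lt_add_one i)
  unfold gapLen
  simp only [Nat.add_sub_cancel]
  omega

end TrapConfig

section TrapKernel

variable {ω : ℕ → Bool}

noncomputable def trapKernel (ω : ℕ → Bool) (x y : Option ℕ) : ℝ≥0∞ :=
  ENNReal.ofReal (transProb ω x y)

def trapSet (ω : ℕ → Bool) : Set (Option ℕ) := {o | trapInd ω o = true}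

theorem IsTrappedRW.isMarkovChain {Ω : Type*} [MeasurableSpace Ω] {P : Measure Ω}
    {S : ℕ → Ω → Option ℕ} (hS : IsTrappedRW ω P S) : IsMarkovChain P S (trapKernel ω) :=
  ⟨hS.2.1, hS.2.2.2⟩

theorem trapKernel_none_of_ne {y : Option ℕ} (hy : y ≠ none) : trapKernel ω none y = 0 := by
  obtain ⟨y, rfl⟩ := Option.ne_none_iff_exists'.1 hy
  simp [trapKernel, transProb]

theorem tsum_trapKernel_mul_of_ne_zero {x : ℕ} (hx : x ≠ 0) (f : Option ℕ → ℝ≥0∞) :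
    ∑' y, trapKernel ω (some x) y * f y = trapKernel ω (some x) none * f none
      + ENNReal.ofReal (if ω x then 1 / 3 else 1 / 2) * (f (some (x - 1)) + f (some (x + 1))) := by
  rw [tsum_eq_sum (s := {none, some (x - 1), some (x + 1)}) fun y hy => ?_]
  · rw [Finset.sum_insert (by simp), Finset.sum_pair (by simp)]
    simp [trapKernel, transProb, hx, mul_add]
  · rcases y with _ | n
    · simp at hy
    · simp only [Finset.mem_insert, Finset.mem_singleton, Option.some.injEq, reduceCtorEq,
        false_or, not_or] at hy
      simp [trapKernel, transProb, hx, hy]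

theorem tsum_trapKernel_zero_mul (f : Option ℕ → ℝ≥0∞) :
    ∑' y, trapKernel ω (some 0) y * f y
      = trapKernel ω (some 0) none * f none + ENNReal.ofReal (2 / 3) * f (some 1) := by
  rw [tsum_eq_sum (s := {none, some 1}) fun y hy => ?_, Finset.sum_pair (by simp)]
  · simp [trapKernel, transProb]
  · rcases y with _ | n
    · simp at hy
    · simp only [Finset.mem_insert, Finset.mem_singleton, Option.some.injEq, reduceCtorEq,
        false_or] at hy
      simp [trapKernel, transProb, hy]

theorem tsum_trapKernel_le_one (hω0 : ω 0 = true) :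
    ∀ y ∉ trapSet ω, ∑' y', trapKernel ω y y' ≤ 1 := by
  rintro (_ | x) hx
  · rw [tsum_eq_single none fun y hy => trapKernel_none_of_ne hy]
    simp [trapKernel, transProb]
  · have hxω : ω x = false := by simpa [trapSet, trapInd] using hx
    have hx0 : x ≠ 0 := by rintro rfl; simp [hω0] at hxω
    have := tsum_trapKernel_mul_of_ne_zero (ω := ω) hx0 1
    simp only [Pi.one_apply, mul_one] at this
    rw [this]
    simp [trapKernel, transProb, hxω, one_add_one_eq_two, ENNReal.inv_mul_cancel]

end TrapKernel

section TrapHitting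

variable {ω : ℕ → Bool}

theorem firstHitProb_trapKernel_none (z : ℕ) :
    firstHitProb (trapKernel ω) (trapSet ω) (some z) none = 0 :=
  firstHitProb_eq_zero_of_absorbing (fun _ hy => trapKernel_none_of_ne hy) (by simp)

theorem firstHitProb_trapKernel_of_eq_false (hω0 : ω 0 = true) {x z : ℕ} (hz : ω z = true)
    (hx : ω x = false) :
    firstHitProb (trapKernel ω) (trapSet ω) (some z) (some x)
      = ENNReal.ofReal (1 / 2) * (firstHitProb (trapKernel ω) (trapSet ω) (some z) (some (x - 1))
          + firstHitProb (trapKernel ω) (trapSet ω) (some z) (some (x + 1))) := by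
  have hx0 : x ≠ 0 := by rintro rfl; simp [hω0] at hx
  rw [firstHitProb_of_notMem (by simpa [trapSet, trapInd] using hz)
    (by simp [trapSet, trapInd, hx]), tsum_trapKernel_mul_of_ne_zero hx0]
  simp [trapKernel, transProb, hx]

theorem firstHitProb_trapKernel_ne_top (hω0 : ω 0 = true) {z : ℕ} (hz : ω z = true)
    (y : Option ℕ) : firstHitProb (trapKernel ω) (trapSet ω) (some z) y ≠ ⊤ :=
  ne_top_of_le_ne_top one_ne_top <| firstHitProb_le_one (tsum_trapKernel_le_one hω0)
    (by simpa [trapSet, trapInd] using hz) y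

/-- Gambler's ruin: off the traps the hitting probability is harmonic, hence affine between
consecutive traps. -/
theorem toReal_firstHitProb_trapLoc_add (hω : IsTrapConfig ω) (i j : ℕ) {n : ℕ}
    (hn : n ≤ gapLen ω (i + 1)) :
    (firstHitProb (trapKernel ω) (trapSet ω) (some (trapLoc ω j)) (some (trapLoc ω i + n))).toReal
      = (if i = j then 1 else 0)
          + n / gapLen ω (i + 1) * ((if i + 1 = j then 1 else 0) - (if i = j then 1 else 0)) := by
  set hit := firstHitProb (trapKernel ω) (trapSet ω) (some (trapLoc ω j)) with hhit
  have hfin : ∀ y, hit y ≠ ⊤ := firstHitProb_trapKernel_ne_top hω.1 (hω.trapLoc_mem j)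
  have htrap : ∀ m, (hit (some (trapLoc ω m))).toReal = if m = j then 1 else 0 := fun m => by
    rw [hhit, firstHitProb_of_mem (by simpa [trapSet, trapInd] using hω.trapLoc_mem m)]
    simp only [Option.some.injEq, hω.trapLoc_inj]
    split_ifs <;> simp
  have hL := hω.trapLoc_add_gapLen i
  have hharm : ∀ m, 0 < m → m < gapLen ω (i + 1) →
      2 * (hit (some (trapLoc ω i + m))).toReal
        = (hit (some (trapLoc ω i + (m - 1)))).toReal
          + (hit (some (trapLoc ω i + (m + 1)))).toReal := by
    intro m hm₀ hm
    rw [hhit, firstHitProb_trapKernel_of_eq_false hω.1 (hω.trapLoc_mem j)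
      (eq_false_of_trapLoc_lt_of_lt_succ (i := i) (x := trapLoc ω i + m) (by omega) (by omega)),
      ENNReal.toReal_mul, ENNReal.toReal_add (hfin _) (hfin _), ENNReal.toReal_ofReal (by norm_num),
      show trapLoc ω i + m - 1 = trapLoc ω i + (m - 1) by omega, add_assoc]
    ring
  have hinterp := eq_interpolate_of_harmonic (fun m => (hit (some (trapLoc ω i + m))).toReal)
    (hω.one_le_gapLen_s8 (Nat.le_add_left 1 i)) hharm hn
  simpa only [add_zero, hL, htrap] using hinterp

end TrapHitting

section EmbeddedTransition

variable {ω : ℕ → Bool}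

/-- The transition matrix of the embedded walk, `ℙ(ξ_{l+1} = x_j | ξ_l = x_i)`. -/
noncomputable def embTransition (ω : ℕ → Bool) (i j : ℕ) : ℝ :=
  2 / 3 * ((if j + 1 = i then 1 / (2 * (gapLen ω i : ℝ)) else 0)
    + (if j = i then 1 - 1 / (2 * (gapLen ω (if i = 0 then 1 else i) : ℝ))
        - 1 / (2 * (gapLen ω (i + 1) : ℝ)) else 0)
    + (if j = i + 1 then (if i = 0 then 2 else 1) / (2 * (gapLen ω (i + 1) : ℝ)) else 0))

theorem embTransition_nonneg (hω : IsTrapConfig ω) (i j : ℕ) : 0 ≤ embTransition ω i j := by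
  have h₁ : 1 / (2 * (gapLen ω (i + 1) : ℝ)) ≤ 1 / 2 := by
    gcongr; linarith [hω.one_le_gapLen_real (Nat.le_add_left 1 i)]
  have h₂ : 1 / (2 * (gapLen ω (if i = 0 then 1 else i) : ℝ)) ≤ 1 / 2 := by
    gcongr
    linarith [hω.one_le_gapLen_real (show 1 ≤ if i = 0 then 1 else i by split_ifs <;> omega)]
  unfold embTransition
  split_ifs at h₂ ⊢ <;> first | positivity | linarith

theorem embTransition_pred {i : ℕ} (hi : 1 ≤ i) :
    embTransition ω i (i - 1) = 2 / 3 * (1 / (2 * (gapLen ω i : ℝ))) := by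
  simp [embTransition, show i - 1 + 1 = i by omega, show i - 1 ≠ i by omega]

theorem embTransition_succ (i : ℕ) :
    embTransition ω i (i + 1)
      = 2 / 3 * ((if i = 0 then 2 else 1) / (2 * (gapLen ω (i + 1) : ℝ))) := by
  simp [embTransition, show i + 1 + 1 ≠ i by omega]

theorem embTransition_self (i : ℕ) :
    embTransition ω i i = 2 / 3 * (1 - 1 / (2 * (gapLen ω (if i = 0 then 1 else i) : ℝ))
      - 1 / (2 * (gapLen ω (i + 1) : ℝ))) := by
  simp [embTransition]

theorem embTransition_of_ne {i j : ℕ} (h₁ : j ≠ i - 1) (h₂ : j ≠ i) (h₃ : j ≠ i + 1) :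
    embTransition ω i j = 0 := by
  simp [embTransition, h₂, h₃, show j + 1 ≠ i by omega]

theorem hasSum_embTransition (hω : IsTrapConfig ω) (i : ℕ) :
    HasSum (embTransition ω i) (2 / 3) := by
  suffices h : ∑ j ∈ {i - 1, i, i + 1}, embTransition ω i j = 2 / 3 from
    h ▸ hasSum_sum_of_ne_finset_zero fun j hj => by
      simp only [Finset.mem_insert, Finset.mem_singleton, not_or] at hj
      exact embTransition_of_ne hj.1 hj.2.1 hj.2.2
  have hL₁ := hω.one_le_gapLen_real (Nat.le_add_left 1 i)
  rcases i with _ | m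
  · rw [Finset.insert_eq_of_mem (by simp), Finset.sum_pair (by simp), embTransition_self,
      embTransition_succ]
    simp only [↓reduceIte, one_div, mul_inv_rev, zero_add]
    field_simp
    ring
  · have hL := hω.one_le_gapLen_real (Nat.le_add_left 1 m)
    rw [Finset.sum_insert (by simp; omega), Finset.sum_pair (by simp),
      embTransition_pred (Nat.le_add_left 1 m), embTransition_self, embTransition_succ]
    simp only [one_div, mul_inv_rev, Nat.add_eq_zero_iff, one_ne_zero, and_false, ↓reduceIte]
    field_simp
    ring

theorem nextHitProb_trapLoc_zero (hω : IsTrapConfig ω) (j : ℕ) :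
    nextHitProb (trapKernel ω) (trapSet ω) (some (trapLoc ω 0)) (some (trapLoc ω j))
      = ENNReal.ofReal (embTransition ω 0 j) := by
  have hfin := firstHitProb_trapKernel_ne_top hω.1 (hω.trapLoc_mem j)
  have hright := toReal_firstHitProb_trapLoc_add hω 0 j (n := 1) (hω.one_le_gapLen_s8 le_rfl)
  rw [hω.trapLoc_zero_s8, zero_add] at hright
  rw [nextHitProb, hω.trapLoc_zero_s8, tsum_trapKernel_zero_mul, firstHitProb_trapKernel_none,
    mul_zero, zero_add, ← ENNReal.ofReal_toReal (ENNReal.mul_ne_top ENNReal.ofReal_ne_top (hfin _)),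
    ENNReal.toReal_mul, ENNReal.toReal_ofReal (by norm_num), hright]
  congr 1
  rcases j with _ | _ | j
  · simp only [embTransition, ↓reduceIte, Nat.cast_one, one_div, one_ne_zero, zero_sub, mul_neg,
      mul_one, zero_add, mul_inv_rev, zero_ne_one, add_zero, mul_eq_mul_left_iff,
      _root_.div_eq_zero_iff, OfNat.ofNat_ne_zero, or_self, or_false]
    ring
  · simp only [embTransition, zero_add, zero_ne_one, ↓reduceIte, Nat.cast_one, one_div, sub_zero,
      mul_one, Nat.reduceAdd, OfNat.ofNat_ne_zero, one_ne_zero, add_zero, mul_eq_mul_left_iff,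
      _root_.div_eq_zero_iff, or_self, or_false]
    field_simp
  · simp [embTransition]

theorem nextHitProb_trapLoc_succ (hω : IsTrapConfig ω) (m j : ℕ) :
    nextHitProb (trapKernel ω) (trapSet ω) (some (trapLoc ω (m + 1))) (some (trapLoc ω j))
      = ENNReal.ofReal (embTransition ω (m + 1) j) := by
  have hfin := firstHitProb_trapKernel_ne_top hω.1 (hω.trapLoc_mem j)
  have hx0 : trapLoc ω (m + 1) ≠ 0 :=
    (hω.trapLoc_zero_s8 ▸ hω.trapLoc_strictMono (Nat.succ_pos m)).ne'
  have hL := hω.one_le_gapLen_s8 (Nat.le_add_left 1 m)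
  have hleft := toReal_firstHitProb_trapLoc_add hω m j (Nat.sub_le (gapLen ω (m + 1)) 1)
  rw [show trapLoc ω m + (gapLen ω (m + 1) - 1) = trapLoc ω (m + 1) - 1 by
    have := hω.trapLoc_add_gapLen m; omega, Nat.cast_sub hL] at hleft
  have hright := toReal_firstHitProb_trapLoc_add hω (m + 1) j (n := 1)
    (hω.one_le_gapLen_s8 (Nat.le_add_left 1 (m + 1)))
  rw [nextHitProb, tsum_trapKernel_mul_of_ne_zero hx0, firstHitProb_trapKernel_none, mul_zero,
    zero_add, if_pos (hω.trapLoc_mem _),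
    ← ENNReal.ofReal_toReal (ENNReal.mul_ne_top ENNReal.ofReal_ne_top
      (ENNReal.add_ne_top.2 ⟨hfin _, hfin _⟩)),
    ENNReal.toReal_mul, ENNReal.toReal_add (hfin _) (hfin _), ENNReal.toReal_ofReal (by norm_num),
    hleft, hright]
  congr 1
  have hL' : (gapLen ω (m + 1) : ℝ) ≠ 0 := by positivity
  have hL₁ : (gapLen ω (m + 1 + 1) : ℝ) ≠ 0 := by
    positivity [hω.one_le_gapLen_s8 (Nat.le_add_left 1 (m + 1))]
  simp only [embTransition, Nat.add_one_ne_zero, if_false]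
  split_ifs <;> (try omega) <;> subst_vars <;> field_simp <;> ring

theorem nextHitProb_trapLoc (hω : IsTrapConfig ω) (i j : ℕ) :
    nextHitProb (trapKernel ω) (trapSet ω) (some (trapLoc ω i)) (some (trapLoc ω j))
      = ENNReal.ofReal (embTransition ω i j) := by
  rcases i with _ | m
  exacts [nextHitProb_trapLoc_zero hω j, nextHitProb_trapLoc_succ hω m j]

end EmbeddedTransition

section VisitTimes

variable {Ω : Type*} {ω : ℕ → Bool} {S : ℕ → Ω → Option ℕ} {a : Ω}

/-- The `l`-th visit to the traps (at times `≥ 1`; the `0`-th one is at time `0`) is at time `k`. -/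
def IsVisitTime (ω : ℕ → Bool) (S : ℕ → Ω → Option ℕ) (l k : ℕ) (a : Ω) : Prop :=
  visitCount ω S a k = l ∧ (k = 0 ∨ trapInd ω (S k a) = true)

theorem visitCount_zero : visitCount ω S a 0 = 0 := by
  simp [visitCount]

theorem visitCount_succ (k : ℕ) : visitCount ω S a (k + 1)
    = visitCount ω S a k + if trapInd ω (S (k + 1) a) = true then 1 else 0 := by
  unfold visitCount
  rw [← Finset.insert_Icc_right_eq_Icc_add_one (Nat.le_add_left 1 k), Finset.filter_insert]
  split_ifs
  · exact Finset.card_insert_of_notMem (by simp)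
  · rfl

theorem visitCount_mono : Monotone (visitCount ω S a) :=
  monotone_nat_of_le_succ fun k => by rw [visitCount_succ]; exact Nat.le_add_right _ _

theorem visitCount_congr {b : Ω} {k : ℕ} (h : ∀ i ≤ k, S i a = S i b) :
    visitCount ω S a k = visitCount ω S b k := by
  unfold visitCount
  rw [Finset.filter_congr fun j hj => by rw [h j (Finset.mem_Icc.1 hj).2]]

theorem visitCount_add_of_forall_notMem {k d : ℕ}
    (hD : ∀ t < d, S (k + 1 + t) a ∉ trapSet ω) :
    visitCount ω S a (k + d) = visitCount ω S a k := by
  induction d with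
  | zero => rfl
  | succ d ih =>
    have hd : trapInd ω (S (k + d + 1) a) ≠ true := by
      simpa [trapSet, show k + 1 + d = k + d + 1 by omega] using hD d (Nat.lt_add_one d)
    rw [← add_assoc, visitCount_succ, if_neg hd, ih fun t ht => hD t (by omega), add_zero]

theorem IsVisitTime.visitCount_lt {l k k' : ℕ} (h : IsVisitTime ω S l k' a) (hk : k < k') :
    visitCount ω S a k < l := by
  obtain ⟨hcount, h0 | htrap⟩ := h
  · omega
  · obtain ⟨m, rfl⟩ : ∃ m, k' = m + 1 := ⟨k' - 1, by omega⟩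
    have := visitCount_mono (ω := ω) (S := S) (a := a) (Nat.le_of_lt_succ hk)
    rw [visitCount_succ, if_pos htrap] at hcount
    omega

theorem IsVisitTime.unique {l k k' : ℕ} (h : IsVisitTime ω S l k a) (h' : IsVisitTime ω S l k' a) :
    k = k' := by
  by_contra hne
  rcases Nat.lt_or_gt_of_ne hne with hlt | hlt
  · exact (h'.visitCount_lt hlt).ne h.1
  · exact (h.visitCount_lt hlt).ne h'.1

theorem exists_isVisitTime_of_le_visitCount {l n : ℕ} (h : l ≤ visitCount ω S a n) :
    ∃ k, IsVisitTime ω S l k a := by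
  induction n with
  | zero => exact ⟨0, by rw [visitCount_zero] at h ⊢; omega, Or.inl rfl⟩
  | succ n ih =>
    by_cases hl : l ≤ visitCount ω S a n
    · exact ih hl
    · have hs := visitCount_succ (ω := ω) (S := S) (a := a) n
      split_ifs at hs with htrap
      · exact ⟨n + 1, by omega, Or.inr htrap⟩
      · omega

theorem IsVisitTime.eq_zero_iff {l k : ℕ} (h : IsVisitTime ω S l k a) : k = 0 ↔ l = 0 := by
  refine ⟨fun hk => by rw [← h.1, hk, visitCount_zero], fun hl => ?_⟩
  obtain ⟨hcount, h0 | htrap⟩ := h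
  · exact h0
  · rcases k with _ | m
    · rfl
    · rw [visitCount_succ, if_pos htrap] at hcount
      omega

theorem IsVisitTime.hitTime_eq {l k : ℕ} (h : IsVisitTime ω S l k a) : hitTime ω S l a = k := by
  unfold hitTime
  split_ifs with hl
  · simp [h.eq_zero_iff.2 hl]
  · have hk : 1 ≤ k := Nat.one_le_iff_ne_zero.2 (mt h.eq_zero_iff.1 hl)
    refine le_antisymm (sInf_le ⟨k, rfl, hk, h.1⟩) (le_sInf ?_)
    rintro _ ⟨k', rfl, -, hk'⟩
    exact Nat.cast_le.2 (not_lt.1 fun hlt => (h.visitCount_lt hlt).ne hk')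

theorem IsVisitTime.embWalk_eq {l k : ℕ} (h : IsVisitTime ω S l k a) : embWalk ω S l a = S k a := by
  have hl : (l : ℕ∞) ≤ numVisits ω S a := le_iSup_of_le k (by rw [h.1])
  simp [embWalk, hl, h.hitTime_eq]

theorem exists_isVisitTime_of_embWalk_eq_some {l x : ℕ} (h : embWalk ω S l a = some x) :
    ∃ k, IsVisitTime ω S l k a := by
  have hl : (l : ℕ∞) ≤ numVisits ω S a := by
    by_contra hl
    simp [embWalk, hl] at h
  rcases Nat.eq_zero_or_pos l with rfl | hl₀
  · exact ⟨0, visitCount_zero, Or.inl rfl⟩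
  · obtain ⟨n, hn⟩ := lt_iSup_iff.1 (lt_of_lt_of_le (Nat.cast_lt.2 (Nat.sub_lt hl₀ one_pos)) hl)
    exact exists_isVisitTime_of_le_visitCount (n := n) (by have := Nat.cast_lt.1 hn; omega)

theorem IsVisitTime.embWalk_succ_eq_some_iff {l k z : ℕ} (h : IsVisitTime ω S l k a)
    (hz : ω z = true) :
    embWalk ω S (l + 1) a = some z ↔ a ∈ ⋃ d, hitsAfter S (trapSet ω) k d (some z) := by
  simp only [Set.mem_iUnion, hitsAfter, Set.mem_ofPred_eq]
  constructor
  · intro hwalk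
    obtain ⟨k', h'⟩ := exists_isVisitTime_of_embWalk_eq_some hwalk
    have hkk' : k < k' := not_le.1 fun hle => by
      have := visitCount_mono (ω := ω) (S := S) (a := a) hle
      rw [h.1, h'.1] at this
      omega
    refine ⟨k' - k - 1, ?_, fun t ht htrap => ?_⟩
    · rw [show k + 1 + (k' - k - 1) = k' by omega, ← h'.embWalk_eq, hwalk]
    · have hlt := h'.visitCount_lt (k := k + 1 + t) (by omega)
      have hmono := visitCount_mono (ω := ω) (S := S) (a := a) (show k ≤ k + t by omega)
      rw [show k + 1 + t = k + t + 1 by omega] at hlt htrap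
      rw [visitCount_succ, if_pos (by simpa [trapSet] using htrap)] at hlt
      rw [h.1] at hmono
      omega
  · rintro ⟨d, hSz, hD⟩
    have htrap : trapInd ω (S (k + 1 + d) a) = true := by simp [hSz, trapInd, hz]
    have hvisit : IsVisitTime ω S (l + 1) (k + 1 + d) a := by
      refine ⟨?_, Or.inr htrap⟩
      rw [show k + 1 + d = k + d + 1 by omega] at htrap ⊢
      rw [visitCount_succ, visitCount_add_of_forall_notMem hD, h.1, if_pos htrap]
    rw [hvisit.embWalk_eq, hSz]

end VisitTimes

section EmbeddedWalk

variable {Ω : Type*} {ω : ℕ → Bool} {S : ℕ → Ω → Option ℕ}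

theorem determinedUpTo_isVisitTime (l k x : ℕ) :
    DeterminedUpTo S k {a | IsVisitTime ω S l k a ∧ S k a = some x} := by
  rintro a b hab ⟨⟨hcount, hk⟩, hx⟩
  refine ⟨⟨(visitCount_congr hab).symm.trans hcount, ?_⟩, (hab k le_rfl).symm.trans hx⟩
  rwa [← hab k le_rfl]

theorem embWalk_eq_some_eq_iUnion (l x : ℕ) :
    {a | embWalk ω S l a = some x} = ⋃ k, {a | IsVisitTime ω S l k a ∧ S k a = some x} := by
  ext a
  simp only [Set.mem_ofPred_eq, Set.mem_iUnion]
  constructor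
  · intro h
    obtain ⟨k, hk⟩ := exists_isVisitTime_of_embWalk_eq_some h
    exact ⟨k, hk, hk.embWalk_eq ▸ h⟩
  · rintro ⟨k, hk, hx⟩
    rw [hk.embWalk_eq, hx]

variable [MeasurableSpace Ω] {P : Measure Ω}

theorem IsTrappedRW.measure_embWalk_succ_inter (hS : IsTrappedRW ω P S) (l x : ℕ) {z : ℕ}
    (hz : ω z = true) :
    P ({a | embWalk ω S (l + 1) a = some z} ∩ {a | embWalk ω S l a = some x})
      = nextHitProb (trapKernel ω) (trapSet ω) (some x) (some z)
          * P {a | embWalk ω S l a = some x} := by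
  have hX := hS.isMarkovChain
  set B := fun k => {a | IsVisitTime ω S l k a ∧ S k a = some x}
  have hB : ∀ k, MeasurableSet (B k) := fun k =>
    hX.measurableSet_of_determinedUpTo (determinedUpTo_isVisitTime l k x)
  have hdisj : Pairwise (Function.onFun Disjoint B) := fun k k' hne =>
    Set.disjoint_left.2 fun a ha ha' => hne (ha.1.unique ha'.1)
  have hnext : ∀ k, {a | embWalk ω S (l + 1) a = some z} ∩ B k
      = B k ∩ ⋃ d, hitsAfter S (trapSet ω) k d (some z) := fun k => by
    ext a
    exact ⟨fun ⟨hw, hb⟩ => ⟨hb, (hb.1.embWalk_succ_eq_some_iff hz).1 hw⟩,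
      fun ⟨hb, hw⟩ => ⟨(hb.1.embWalk_succ_eq_some_iff hz).2 hw, hb⟩⟩
  have hz' : some z ∈ trapSet ω := by simpa [trapSet, trapInd] using hz
  rw [embWalk_eq_some_eq_iUnion l x]
  calc P ({a | embWalk ω S (l + 1) a = some z} ∩ ⋃ k, B k)
      = P (⋃ k, B k ∩ ⋃ d, hitsAfter S (trapSet ω) k d (some z)) := by
        rw [Set.inter_iUnion]; simp only [hnext]
    _ = ∑' k, P (B k ∩ ⋃ d, hitsAfter S (trapSet ω) k d (some z)) :=
        measure_iUnion (fun _ _ hne => (hdisj hne).mono Set.inter_subset_left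
          Set.inter_subset_left) fun k => (hB k).inter <| MeasurableSet.iUnion fun d =>
            hX.measurableSet_of_determinedUpTo (determinedUpTo_hitsAfter S k d)
    _ = ∑' k, nextHitProb (trapKernel ω) (trapSet ω) (some x) (some z) * P (B k) :=
        tsum_congr fun k => hX.measure_inter_iUnion_hitsAfter hz'
          (determinedUpTo_isVisitTime l k x) fun a ha => ha.2
    _ = _ := by rw [ENNReal.tsum_mul_left, measure_iUnion hdisj hB]

theorem IsTrappedRW.condProb_embWalk_succ (hS : IsTrappedRW ω P S) (hω : IsTrapConfig ω)
    (l i j : ℕ) (hpos : P {a | embWalk ω S l a = some (trapLoc ω i)} ≠ 0) :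
    condProb P {a | embWalk ω S (l + 1) a = some (trapLoc ω j)}
        {a | embWalk ω S l a = some (trapLoc ω i)}
      = ENNReal.ofReal (embTransition ω i j) := by
  have := hS.1
  rw [condProb, hS.measure_embWalk_succ_inter l _ (hω.trapLoc_mem j),
    ENNReal.mul_div_cancel_right hpos (measure_ne_top P _), nextHitProb_trapLoc hω]

end EmbeddedWalk

/-- transition probabilities of the embedded walk on the trap locations. -/
theorem embedded_walk_transition_probabilities
    (ω : ℕ → Bool) (hω : IsTrapConfig ω)
    {Ω : Type*} [MeasurableSpace Ω] (P : MeasureTheory.Measure Ω)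
    (S : ℕ → Ω → Option ℕ) (hS : IsTrappedRW ω P S)
    (l i : ℕ) (hpos : 0 < P {a | embWalk ω S l a = some (trapLoc ω i)}) :
    (1 ≤ i →
      condProb P {a | embWalk ω S (l + 1) a = some (trapLoc ω (i - 1))}
          {a | embWalk ω S l a = some (trapLoc ω i)}
        = ENNReal.ofReal ((2 / 3) * (1 / (2 * (gapLen ω i : ℝ))))) ∧
    (condProb P {a | embWalk ω S (l + 1) a = some (trapLoc ω (i + 1))}
        {a | embWalk ω S l a = some (trapLoc ω i)}
      = ENNReal.ofReal ((2 / 3) *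
          ((if i = 0 then 2 else 1) / (2 * (gapLen ω (i + 1) : ℝ))))) ∧
    (condProb P {a | embWalk ω S (l + 1) a = some (trapLoc ω i)}
        {a | embWalk ω S l a = some (trapLoc ω i)}
      = ENNReal.ofReal ((2 / 3) *
          (1 - 1 / (2 * (gapLen ω (if i = 0 then 1 else i) : ℝ))
            - 1 / (2 * (gapLen ω (i + 1) : ℝ))))) ∧
    (∀ j : ℕ, j ≠ i - 1 → j ≠ i → j ≠ i + 1 →
      condProb P {a | embWalk ω S (l + 1) a = some (trapLoc ω j)}
          {a | embWalk ω S l a = some (trapLoc ω i)} = 0) ∧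
    (∑' j : ℕ, condProb P {a | embWalk ω S (l + 1) a = some (trapLoc ω j)}
        {a | embWalk ω S l a = some (trapLoc ω i)}) = 2 / 3 := by
  simp only [hS.condProb_embWalk_succ hω l i _ hpos.ne']
  refine ⟨fun hi => by rw [embTransition_pred hi], by rw [embTransition_succ],
    by rw [embTransition_self],
    fun j h₁ h₂ h₃ => by rw [embTransition_of_ne h₁ h₂ h₃, ENNReal.ofReal_zero], ?_⟩
  have hsum := hasSum_embTransition hω i
  rw [← ENNReal.ofReal_tsum_of_nonneg (embTransition_nonneg hω i) hsum.summable, hsum.tsum_eq,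
    ENNReal.ofReal_div_of_pos (by norm_num)]
  norm_num
end
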